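/- Let I be a type of interventions, A a type of actions, Ω a type, val : I → Ω, L : A → Ω, and Markov : Ω → Prop a predicate such that (i) Markov (val d) holds for all d, and (ii) for every ω with Markov ω there exists d : I with val d = ω (richness). Suppose Int : Set I → A → Set I satisfies Int S a ⊆ S for all S, a, together with: (D1) for all S, a, d, if d ∈ S and L a = val d then d ∈ Int S a; (D2) for all S, a, if d ∈ Int S a and b ∈ Int S a then val d = val b; (D3) for all S, S', a, d, if d ∈ S ∩ S' then (d ∈ Int S a ↔ d ∈ Int S' a); (D4) for all S, a, if ¬Markov (L a) then Int S a = ∅. Then for every S, a, d: d ∈ Int S a if and only if (d ∈ S and L a = val d). -/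
import Mathlib

theorem impossibility_for_interpretations
    {I A Ω : Type*} (val : I → Ω) (L : A → Ω) (Markov : Ω → Prop)
    (hMarkovVal : ∀ d : I, Markov (val d))
    (hRich : ∀ ω : Ω, Markov ω → ∃ d : I, val d = ω)
    (Int : Set I → A → Set I)
    (hSub : ∀ (S : Set I) (a : A), Int S a ⊆ S)
    (hD1 : ∀ (S : Set I) (a : A) (d : I), d ∈ S → L a = val d → d ∈ Int S a)
    (hD2 : ∀ (S : Set I) (a : A) (d b : I), d ∈ Int S a → b ∈ Int S a → val d = val b)
    (hD3 : ∀ (S S' : Set I) (a : A) (d : I), d ∈ S → d ∈ S' →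
      (d ∈ Int S a ↔ d ∈ Int S' a))
    (hD4 : ∀ (S : Set I) (a : A), ¬ Markov (L a) → Int S a = ∅) :
    ∀ (S : Set I) (a : A) (d : I), d ∈ Int S a ↔ (d ∈ S ∧ L a = val d) := by
  intro S a d
  constructor
  · intro hd
    have hdS : d ∈ S := hSub S a hd
    refine ⟨hdS, ?_⟩
    by_cases hM : Markov (L a)
    · obtain ⟨b, hb⟩ := hRich _ hM
      set S' : Set I := {d, b}
      have hbS' : b ∈ S' := by simp [S']
      have hdS' : d ∈ S' := by simp [S']
      have hbInt : b ∈ Int S' a := hD1 S' a b hbS' hb.symm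
      have hdInt : d ∈ Int S' a := (hD3 S S' a d hdS hdS').mp hd
      have := hD2 S' a d b hdInt hbInt
      rw [← this] at hb
      exact hb.symm
    · have := hD4 S a hM
      rw [this] at hd
      exact absurd hd (Set.notMem_empty d)
  · exact fun ⟨h1, h2⟩ => hD1 S a d h1 h2
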